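/- Let Λ be a row-finite k-graph with no sources, F the free commutative monoid on Λ⁰, and ∼ the congruence on F generated by the relations u ∼ Σ_{λ ∈ uΛ^{e_i}} s(λ) (for each vertex u and each i ∈ {1,…,k}). Then for α, β ∈ F∖{0}, α ∼ β if and only if there exists γ ∈ F∖{0} such that α → γ and β → γ, where → is the reflexive–transitive closure of the single-generator replacement moves. -/

import Mathlib

/-- A (small) `k`-graph: a small category `Λ` with vertex set `V`, path set `P`,
range and source maps `r, s`, a degree functor `d : Λ → ℕᵏ` satisfying the
unique factorization property. -/
structure KGraph (k : ℕ) where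
  V : Type
  P : Type
  r : P → V
  s : P → V
  d : P → Fin k → ℕ
  ident : V → P
  comp : (p q : P) → s p = r q → P
  r_ident : ∀ v, r (ident v) = v
  s_ident : ∀ v, s (ident v) = v
  d_ident : ∀ v, d (ident v) = 0
  r_comp : ∀ p q h, r (comp p q h) = r p
  s_comp : ∀ p q h, s (comp p q h) = s q
  d_comp : ∀ p q h, d (comp p q h) = d p + d q
  ident_comp : ∀ (p : P) (h : s (ident (r p)) = r p), comp (ident (r p)) p h = p
  comp_ident : ∀ (p : P) (h : s p = r (ident (s p))), comp p (ident (s p)) h = p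
  comp_assoc : ∀ (p q t : P) (h1 : s p = r q) (h2 : s q = r t)
      (h3 : s (comp p q h1) = r t) (h4 : s p = r (comp q t h2)),
      comp (comp p q h1) t h3 = comp p (comp q t h2) h4
  factor : ∀ (p : P) (m n : Fin k → ℕ), d p = m + n →
      ∃! qt : P × P, ∃ h : s qt.1 = r qt.2,
        comp qt.1 qt.2 h = p ∧ d qt.1 = m ∧ d qt.2 = n

namespace KGraph

variable {k : ℕ}

/-- `vΛⁿ`, the set of paths with range `v` and degree `n`. -/
def pathsSet (Λ : KGraph k) (v : Λ.V) (n : Fin k → ℕ) : Set Λ.P :=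
  {p | Λ.r p = v ∧ Λ.d p = n}

/-- `Λ` is row-finite if every `vΛⁿ` is finite. -/
def RowFinite (Λ : KGraph k) : Prop := ∀ v n, (Λ.pathsSet v n).Finite

/-- `Λ` has no sources if every `vΛⁿ` is nonempty. -/
def NoSources (Λ : KGraph k) : Prop := ∀ v n, (Λ.pathsSet v n).Nonempty

/-- The element `Σ_{λ ∈ vΛⁿ} s(λ)` of the free commutative monoid `ℕ^(Λ⁰)`. -/
noncomputable def vSum (Λ : KGraph k) (hfin : Λ.RowFinite) (v : Λ.V) (n : Fin k → ℕ) :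
    Λ.V →₀ ℕ :=
  ∑ p ∈ (hfin v n).toFinset, Finsupp.single (Λ.s p) 1

end KGraph

namespace KGraph

/-- One-step generating relation `u ∼ Σ_{λ ∈ uΛ^{e_i}} s(λ)` (on single generators). -/
noncomputable def OneStepRel (Λ : KGraph k) (hfin : Λ.RowFinite) :
    (Λ.V →₀ ℕ) → (Λ.V →₀ ℕ) → Prop :=
  fun a b => ∃ (u : Λ.V) (i : Fin k),
    a = Finsupp.single u 1 ∧ b = Λ.vSum hfin u (Pi.single i 1)

/-- Generating relation `u ∼ Σ_{λ ∈ uΛⁿ} s(λ)` for all degrees `n`. -/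
noncomputable def AllRel (Λ : KGraph k) (hfin : Λ.RowFinite) :
    (Λ.V →₀ ℕ) → (Λ.V →₀ ℕ) → Prop :=
  fun a b => ∃ (u : Λ.V) (n : Fin k → ℕ),
    a = Finsupp.single u 1 ∧ b = Λ.vSum hfin u n

/-- The elementary move `→ᵢ`: replace one occurrence of a generator `u`
by `Σ_{λ ∈ uΛ^{e_i}} s(λ)`. -/
noncomputable def MoveStep (Λ : KGraph k) (hfin : Λ.RowFinite) :
    (Λ.V →₀ ℕ) → (Λ.V →₀ ℕ) → Prop :=
  fun a b => ∃ (u : Λ.V) (i : Fin k) (γ : Λ.V →₀ ℕ),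
    a = γ + Finsupp.single u 1 ∧ b = γ + Λ.vSum hfin u (Pi.single i 1)

/-- The relation `→`: the reflexive–transitive closure of the elementary moves. -/
noncomputable def Move (Λ : KGraph k) (hfin : Λ.RowFinite) :
    (Λ.V →₀ ℕ) → (Λ.V →₀ ℕ) → Prop :=
  Relation.ReflTransGen (MoveStep Λ hfin)

end KGraph

/-!
For a degree `n`, let `Tₙ` be the additive endomorphism of `ℕ^(Λ⁰)` that replaces every vertex
`u` by `Σ_{λ ∈ uΛⁿ} s(λ)`. Unique factorization identifies `uΛ^(m+n)` with the pairs `(μ, ν)`,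
`μ ∈ uΛᵐ`, `ν ∈ s(μ)Λⁿ`, so `Tₙ ∘ Tₘ = T_(m+n)`. Writing `n` as a sum of basis vectors shows
`α → Tₙ α`, and an elementary move `α →ᵢ β` can always be continued to `T_(eᵢ) α`; hence every
`α → β` continues to some `Tₙ α`. Since `Tₘ α` and `Tₙ α` both lead to `T_(m+n) α`, the relation
`→` is confluent, so "having a common successor" is a congruence. It contains the generating
relations and is contained in `∼`, so it is `∼`; no sources keeps all successors of `α ≠ 0`
nonzero.
-/

namespace KGraph

variable {k : ℕ} {Λ : KGraph k}

theorem eq_and_eq_of_comp_eq {a b a' b' : Λ.P} {h : Λ.s a = Λ.r b} {h' : Λ.s a' = Λ.r b'}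
    (he : Λ.comp a b h = Λ.comp a' b' h') (ha : Λ.d a = Λ.d a') (hb : Λ.d b = Λ.d b') :
    a = a' ∧ b = b' := by
  obtain ⟨_, _, huniq⟩ := Λ.factor (Λ.comp a b h) (Λ.d a) (Λ.d b) (Λ.d_comp a b h)
  have e₁ := huniq (a, b) ⟨h, rfl, rfl, rfl⟩
  have e₂ := huniq (a', b') ⟨h', he.symm, ha.symm, hb.symm⟩
  exact Prod.ext_iff.1 (e₁.trans e₂.symm)

theorem eq_ident_of_d_eq_zero {p : Λ.P} (hp : Λ.d p = 0) : p = Λ.ident (Λ.r p) := by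
  have he : Λ.comp (Λ.ident (Λ.r p)) p (Λ.s_ident _) =
      Λ.comp p (Λ.ident (Λ.s p)) (Λ.r_ident _).symm := by
    rw [Λ.ident_comp, Λ.comp_ident]
  exact (eq_and_eq_of_comp_eq he (by rw [Λ.d_ident, hp]) (by rw [Λ.d_ident, hp])).1.symm

section vSum

variable (hfin : Λ.RowFinite)

theorem mem_toFinset_pathsSet {v : Λ.V} {n : Fin k → ℕ} {p : Λ.P} :
    p ∈ (hfin v n).toFinset ↔ Λ.r p = v ∧ Λ.d p = n :=
  Set.Finite.mem_toFinset _

theorem vSum_zero (u : Λ.V) : Λ.vSum hfin u 0 = Finsupp.single u 1 := by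
  have hpaths : (hfin u 0).toFinset = {Λ.ident u} := by
    ext p
    rw [mem_toFinset_pathsSet, Finset.mem_singleton]
    constructor
    · rintro ⟨rfl, hp⟩
      exact eq_ident_of_d_eq_zero hp
    · rintro rfl
      exact ⟨Λ.r_ident u, Λ.d_ident u⟩
  rw [vSum, hpaths, Finset.sum_singleton, Λ.s_ident]

theorem vSum_ne_zero (hns : Λ.NoSources) (u : Λ.V) (n : Fin k → ℕ) :
    Λ.vSum hfin u n ≠ 0 := by
  obtain ⟨p, hp⟩ := hns u n
  rw [vSum, Ne, Finset.sum_eq_zero_iff, not_forall]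
  exact ⟨p, by simpa [mem_toFinset_pathsSet] using hp⟩

theorem vSum_add (u : Λ.V) (m n : Fin k → ℕ) :
    Λ.vSum hfin u (m + n) = ∑ μ ∈ (hfin u m).toFinset, Λ.vSum hfin (Λ.s μ) n := by
  rw [vSum]
  refine Eq.trans ?_ (Finset.sum_sigma (hfin u m).toFinset (fun μ => (hfin (Λ.s μ) n).toFinset)
    fun x => Finsupp.single (Λ.s x.2) 1)
  symm
  refine Finset.sum_bij (fun x hx => Λ.comp x.1 x.2
      ((mem_toFinset_pathsSet hfin).1 (Finset.mem_sigma.1 hx).2).1.symm) ?_ ?_ ?_ ?_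
  · rintro ⟨μ, ν⟩ hx
    obtain ⟨⟨hrμ, hdμ⟩, ⟨-, hdν⟩⟩ := by simpa only [Finset.mem_sigma, mem_toFinset_pathsSet] using hx
    exact (mem_toFinset_pathsSet hfin).2 ⟨by rw [Λ.r_comp, hrμ], by rw [Λ.d_comp, hdμ, hdν]⟩
  · rintro ⟨μ, ν⟩ hx ⟨μ', ν'⟩ hy he
    obtain ⟨⟨-, hdμ⟩, ⟨-, hdν⟩⟩ := by simpa only [Finset.mem_sigma, mem_toFinset_pathsSet] using hx
    obtain ⟨⟨-, hdμ'⟩, ⟨-, hdν'⟩⟩ := by simpa only [Finset.mem_sigma, mem_toFinset_pathsSet] using hy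
    obtain ⟨rfl, rfl⟩ := eq_and_eq_of_comp_eq he (hdμ.trans hdμ'.symm) (hdν.trans hdν'.symm)
    rfl
  · intro p hp
    obtain ⟨hrp, hdp⟩ := (mem_toFinset_pathsSet hfin).1 hp
    obtain ⟨⟨μ, ν⟩, ⟨h, hcomp, hdμ, hdν⟩, -⟩ := Λ.factor p m n hdp
    refine ⟨⟨μ, ν⟩, Finset.mem_sigma.2 ⟨(mem_toFinset_pathsSet hfin).2 ⟨?_, hdμ⟩,
      (mem_toFinset_pathsSet hfin).2 ⟨h.symm, hdν⟩⟩, hcomp⟩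
    rw [← Λ.r_comp μ ν h, hcomp, hrp]
  · intro x _
    rw [Λ.s_comp]

end vSum

/-- The complete development `Tₙ`, replacing each vertex `u` by `Σ_{λ ∈ uΛⁿ} s(λ)`. -/
noncomputable def develop (Λ : KGraph k) (hfin : Λ.RowFinite) (n : Fin k → ℕ) :
    (Λ.V →₀ ℕ) →+ (Λ.V →₀ ℕ) :=
  Finsupp.liftAddHom fun u => multiplesHom _ (Λ.vSum hfin u n)

section develop

variable (hfin : Λ.RowFinite)

theorem develop_single (n : Fin k → ℕ) (u : Λ.V) (c : ℕ) :
    develop Λ hfin n (Finsupp.single u c) = c • Λ.vSum hfin u n :=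
  Finsupp.liftAddHom_apply_single _ _ _

theorem develop_vSum (u : Λ.V) (m n : Fin k → ℕ) :
    develop Λ hfin n (Λ.vSum hfin u m) = Λ.vSum hfin u (m + n) := by
  rw [vSum_add, vSum, map_sum]
  simp only [develop_single, one_smul]

theorem develop_zero_apply (α : Λ.V →₀ ℕ) : develop Λ hfin 0 α = α := by
  induction α using Finsupp.induction_linear with
  | zero => rw [map_zero]
  | add f g hf hg => rw [map_add, hf, hg]
  | single u c => rw [develop_single, vSum_zero, Finsupp.smul_single_one]

theorem develop_develop_apply (m n : Fin k → ℕ) (α : Λ.V →₀ ℕ) :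
    develop Λ hfin n (develop Λ hfin m α) = develop Λ hfin (m + n) α := by
  induction α using Finsupp.induction_linear with
  | zero => simp only [map_zero]
  | add f g hf hg => simp only [map_add, hf, hg]
  | single u c => rw [develop_single, map_nsmul, develop_vSum, develop_single]

end develop

section Move

variable {hfin : Λ.RowFinite}

theorem MoveStep.add_left {a b : Λ.V →₀ ℕ} (c : Λ.V →₀ ℕ) (h : MoveStep Λ hfin a b) :
    MoveStep Λ hfin (c + a) (c + b) := by
  obtain ⟨u, i, γ, rfl, rfl⟩ := h
  exact ⟨u, i, c + γ, (add_assoc _ _ _).symm, (add_assoc _ _ _).symm⟩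

theorem Move.add_left {a b : Λ.V →₀ ℕ} (c : Λ.V →₀ ℕ) (h : Move Λ hfin a b) :
    Move Λ hfin (c + a) (c + b) :=
  Relation.ReflTransGen.lift (c + ·) (fun _ _ => MoveStep.add_left c) _ _ h

theorem Move.add {a b c d : Λ.V →₀ ℕ} (hab : Move Λ hfin a b) (hcd : Move Λ hfin c d) :
    Move Λ hfin (a + c) (b + d) := by
  refine (Move.add_left a hcd).trans ?_
  rw [add_comm a d, add_comm b d]
  exact Move.add_left d hab

theorem Move.nsmul {a b : Λ.V →₀ ℕ} (h : Move Λ hfin a b) (c : ℕ) :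
    Move Λ hfin (c • a) (c • b) := by
  induction c with
  | zero => simp only [zero_smul]; exact .refl
  | succ c ih => simp only [succ_nsmul]; exact ih.add h

variable (hfin) in
theorem move_single_vSum (u : Λ.V) (i : Fin k) :
    Move Λ hfin (Finsupp.single u 1) (Λ.vSum hfin u (Pi.single i 1)) :=
  .single ⟨u, i, 0, (zero_add _).symm, (zero_add _).symm⟩

variable (hfin) in
theorem move_develop_single (i : Fin k) (α : Λ.V →₀ ℕ) :
    Move Λ hfin α (develop Λ hfin (Pi.single i 1) α) := by
  induction α using Finsupp.induction_linear with
  | zero => rw [map_zero]; exact .refl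
  | add f g hf hg => rw [map_add]; exact hf.add hg
  | single u c =>
    rw [develop_single, ← Finsupp.smul_single_one]
    exact (move_single_vSum hfin u i).nsmul c

variable (hfin) in
theorem move_develop (n : Fin k → ℕ) (α : Λ.V →₀ ℕ) : Move Λ hfin α (develop Λ hfin n α) := by
  induction n using Pi.single_induction generalizing α with
  | zero => rw [develop_zero_apply]; exact .refl
  | add m n hm hn =>
    rw [← develop_develop_apply]
    exact (hm α).trans (hn _)
  | single i c =>
    induction c generalizing α with
    | zero => rw [Pi.single_zero, develop_zero_apply]; exact .refl
    | succ c ih =>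
      rw [Pi.single_add, ← develop_develop_apply]
      exact (ih α).trans (move_develop_single hfin i _)

theorem Move.map_develop {a b : Λ.V →₀ ℕ} (h : Move Λ hfin a b) (n : Fin k → ℕ) :
    Move Λ hfin (develop Λ hfin n a) (develop Λ hfin n b) := by
  induction h with
  | refl => exact .refl
  | tail _ hbc ih =>
    refine ih.trans ?_
    obtain ⟨u, i, γ, rfl, rfl⟩ := hbc
    -- `Tₙ (Σ_{uΛ^{eᵢ}} s(λ)) = Σ_{uΛ^(eᵢ+n)} s(λ) = T_(eᵢ) (Σ_{uΛⁿ} s(λ))`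
    rw [map_add, map_add, develop_single, one_smul, develop_vSum, add_comm (Pi.single i 1),
      ← develop_vSum]
    exact Move.add .refl (move_develop_single hfin i _)

theorem Move.exists_move_develop {a b : Λ.V →₀ ℕ} (h : Move Λ hfin a b) :
    ∃ n, Move Λ hfin b (develop Λ hfin n a) := by
  induction h with
  | refl => exact ⟨0, by rw [develop_zero_apply]; exact .refl⟩
  | tail _ hbc ih =>
    obtain ⟨n, hn⟩ := ih
    obtain ⟨u, i, γ, rfl, rfl⟩ := hbc
    refine ⟨n + Pi.single i 1, ?_⟩
    have hstep : Move Λ hfin (γ + Λ.vSum hfin u (Pi.single i 1))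
        (develop Λ hfin (Pi.single i 1) (γ + Finsupp.single u 1)) := by
      rw [map_add, develop_single, one_smul]
      exact (move_develop_single hfin i γ).add .refl
    rw [← develop_develop_apply]
    exact hstep.trans (hn.map_develop _)

theorem Move.confluent {a b c : Λ.V →₀ ℕ} (hab : Move Λ hfin a b) (hac : Move Λ hfin a c) :
    Relation.Join (Move Λ hfin) b c := by
  obtain ⟨m, hm⟩ := hab.exists_move_develop
  obtain ⟨n, hn⟩ := hac.exists_move_develop
  refine ⟨develop Λ hfin (m + n) a, hm.trans ?_, hn.trans ?_⟩
  · rw [← develop_develop_apply]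
    exact move_develop hfin n _
  · rw [add_comm, ← develop_develop_apply]
    exact move_develop hfin m _

theorem MoveStep.ne_zero (hns : Λ.NoSources) {a b : Λ.V →₀ ℕ} (h : MoveStep Λ hfin a b) :
    b ≠ 0 := by
  obtain ⟨u, i, γ, -, rfl⟩ := h
  exact fun h0 => vSum_ne_zero hfin hns u _ (add_eq_zero.1 h0).2

theorem Move.ne_zero (hns : Λ.NoSources) {a b : Λ.V →₀ ℕ} (h : Move Λ hfin a b) (ha : a ≠ 0) :
    b ≠ 0 := by
  cases h with
  | refl => exact ha
  | tail _ hbc => exact hbc.ne_zero hns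

end Move

noncomputable def joinCon (Λ : KGraph k) (hfin : Λ.RowFinite) : AddCon (Λ.V →₀ ℕ) where
  r := Relation.Join (Move Λ hfin)
  iseqv := Relation.equivalence_join (r := Relation.ReflTransGen (MoveStep Λ hfin))
    fun _ _ _ => Move.confluent
  add' := fun ⟨γ, ha, hb⟩ ⟨δ, hc, hd⟩ => ⟨γ + δ, ha.add hc, hb.add hd⟩

theorem move_le_addConGen (hfin : Λ.RowFinite) :
    Move Λ hfin ≤ addConGen (OneStepRel Λ hfin) := by
  refine Relation.reflTransGen_le_of_equivalence_of_le (addConGen _).iseqv ?_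
  rintro _ _ ⟨u, i, γ, rfl, rfl⟩
  exact (addConGen _).add ((addConGen _).refl γ) (AddConGen.Rel.of _ _ ⟨u, i, rfl, rfl⟩)

theorem addConGen_oneStepRel_eq_joinCon (hfin : Λ.RowFinite) :
    addConGen (OneStepRel Λ hfin) = joinCon Λ hfin := by
  refine le_antisymm (AddCon.addConGen_le.2 ?_) fun a b hab => ?_
  · rintro _ _ ⟨u, i, rfl, rfl⟩
    exact ⟨_, move_single_vSum hfin u i, .refl⟩
  · exact Relation.join_le_of_equivalence_of_le (addConGen _).iseqv (move_le_addConGen hfin) a b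
      hab

end KGraph

open KGraph in
theorem stmt3_general {k : ℕ} (Λ : KGraph k) (hfin : Λ.RowFinite) (hns : Λ.NoSources)
    (α β : Λ.V →₀ ℕ) (hα : α ≠ 0) :
    (addConGen (OneStepRel Λ hfin)) α β ↔
      ∃ γ : Λ.V →₀ ℕ, γ ≠ 0 ∧ Move Λ hfin α γ ∧ Move Λ hfin β γ := by
  rw [addConGen_oneStepRel_eq_joinCon]
  constructor
  · rintro ⟨γ, hαγ, hβγ⟩
    exact ⟨γ, hαγ.ne_zero hns hα, hαγ, hβγ⟩
  · rintro ⟨γ, -, hαγ, hβγ⟩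
    exact ⟨γ, hαγ, hβγ⟩

open KGraph in
/-- **Confluence lemma.** Let `Λ` be a row-finite `k`-graph with no sources, `F` the
free commutative monoid on `Λ⁰` and `∼` the congruence generated by the relations
`u ∼ Σ_{λ ∈ uΛ^{e_i}} s(λ)`. Then for nonzero `α, β`, `α ∼ β` iff there is a nonzero
`γ` with `α → γ` and `β → γ`. -/
theorem stmt3 {k : ℕ} (Λ : KGraph k) (hfin : Λ.RowFinite) (hns : Λ.NoSources)
    (α β : Λ.V →₀ ℕ) (hα : α ≠ 0) (hβ : β ≠ 0) :
    (addConGen (OneStepRel Λ hfin)) α β ↔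
      ∃ γ : Λ.V →₀ ℕ, γ ≠ 0 ∧ Move Λ hfin α γ ∧ Move Λ hfin β γ :=
  stmt3_general Λ hfin hns α β hα
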